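/- For α, γ > −1 and m > n ≥ 0, with c_{α,γ} = Γ(γ+α+2)/(Γ(γ+1)Γ(α+1)): c_{α,γ} ∫₀¹ P_n^{(γ,α)}(2x−1) P_{m-1}^{(γ+2,α)}(2x−1) (1−x)^{γ+1} x^α dx = (γ+1)(α+1)_{m-1}(γ+1)_n / ((γ+α+2)_m · n!), where P_k^{(a,b)} is the Jacobi polynomial and (a)_k the Pochhammer symbol. -/

import Mathlib

open MeasureTheory Finset

noncomputable section

/-- Pochhammer symbol `(a)ₖ = a(a+1)⋯(a+k-1)` for real `a`. -/
def poch (a : ℝ) (k : ℕ) : ℝ := (ascPochhammer ℝ k).eval a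

/-- The Jacobi polynomial `P_n^{(a,b)}(x)` via the hypergeometric sum
`P_n^{(a,b)}(x) = ((a+1)ₙ/n!) Σ_{k=0}^n ((-n)ₖ(n+a+b+1)ₖ)/((a+1)ₖ k!) ((1-x)/2)^k`. -/
def jacobiP (n : ℕ) (a b : ℝ) (x : ℝ) : ℝ :=
  poch (a + 1) n / (Nat.factorial n : ℝ) *
    ∑ k ∈ range (n + 1),
      poch (-(n : ℝ)) k * poch ((n : ℝ) + a + b + 1) k /
        (poch (a + 1) k * (Nat.factorial k : ℝ)) * ((1 - x) / 2) ^ k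

/-- The normalizing constant `c_{α,γ} = Γ(γ+α+2)/(Γ(γ+1)Γ(α+1))`. -/
def cJ (α γ : ℝ) : ℝ := Real.Gamma (γ + α + 2) / (Real.Gamma (γ + 1) * Real.Gamma (α + 1))

/-!
Expand `P_n^{(γ,α)}(2x-1)` in powers of `1 - x`. Against the weight `(1-x)^{γ+1+k} x^α`,
the polynomial `P_{m-1}^{(γ+2,α)}(2x-1)`, expanded in powers of `x` by Pfaff's reflection,
integrates to a sum of Beta integrals which Chu–Vandermonde sums to a multiple of
`(k - m + 1)_{m-1}`. This vanishes for `1 ≤ k ≤ n`, so only the constant term of `P_n`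
contributes.
-/

open scoped Nat

lemma poch_zero (a : ℝ) : poch a 0 = 1 := by simp [poch]

lemma poch_succ (a : ℝ) (k : ℕ) : poch a (k + 1) = poch a k * (a + k) :=
  ascPochhammer_succ_eval k a

lemma poch_add (a : ℝ) (j i : ℕ) : poch a (j + i) = poch a j * poch (a + j) i := by
  simp [poch, ← ascPochhammer_mul, Polynomial.eval_comp]

lemma poch_pos {a : ℝ} (ha : 0 < a) (k : ℕ) : 0 < poch a k := ascPochhammer_pos k a ha

lemma poch_ne_zero_of_le {a : ℝ} {N j : ℕ} (ha : poch a N ≠ 0) (hj : j ≤ N) :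
    poch a j ≠ 0 := by
  obtain ⟨i, rfl⟩ := Nat.exists_eq_add_of_le hj
  exact left_ne_zero_of_mul (poch_add a j i ▸ ha)

lemma poch_neg (x : ℝ) (k : ℕ) : poch (-x) k = (-1) ^ k * poch (x - k + 1) k := by
  rw [poch, ascPochhammer_eval_neg_eq_descPochhammer, descPochhammer_eval_eq_ascPochhammer, poch]

lemma poch_neg_natCast (N j : ℕ) : poch (-(N : ℝ)) j = (-1) ^ j * (j ! * N.choose j) := by
  rw [poch, ascPochhammer_eval_neg_eq_descPochhammer, descPochhammer_eval_eq_descFactorial,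
    Nat.descFactorial_eq_factorial_mul_choose]
  push_cast; ring

lemma poch_neg_natCast_of_lt {N j : ℕ} (h : j < N) : poch (-(j : ℝ)) N = 0 :=
  ascPochhammer_eval_neg_coe_nat_of_lt h

lemma Gamma_add_natCast_eq_poch_mul {x : ℝ} (hx : 0 < x) (j : ℕ) :
    Real.Gamma (x + j) = poch x j * Real.Gamma x := by
  induction j with
  | zero => simp [poch_zero]
  | succ j ih =>
    rw [Nat.cast_succ, ← add_assoc, Real.Gamma_add_one (by positivity), ih, poch_succ]
    ring

/-- Chu–Vandermonde, cleared of denominators: it is the binomial theorem for falling factorials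
at `-b` and `c + N - 1`. -/
lemma poch_sub_eq_sum (N : ℕ) (b c : ℝ) :
    poch (c - b) N =
      ∑ j ∈ range (N + 1), (-1) ^ j * N.choose j * poch b j * poch (c + j) (N - j) := by
  have h := Ring.descPochhammer_smeval_add (R := ℝ) N (Commute.all (-b) (c + N - 1))
  rw [Finset.Nat.sum_antidiagonal_eq_sum_range_succ
    (fun i j => (N.choose i : ℝ) * ((descPochhammer ℤ i).smeval (-b) *
      (descPochhammer ℤ j).smeval (c + N - 1))) N] at h
  simp only [Polynomial.descPochhammer_smeval_eq_ascPochhammer,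
    Polynomial.ascPochhammer_smeval_eq_eval] at h
  convert h using 1
  · congr 1; ring
  refine Finset.sum_congr rfl fun j hj => ?_
  have hj : j ≤ N := Nat.lt_succ_iff.mp (Finset.mem_range.mp hj)
  rw [show -b - j + 1 = -(b + j - 1) by ring, ← poch, poch_neg, ← poch,
    show c + N - 1 - ((N - j : ℕ) : ℝ) + 1 = c + j by push_cast [Nat.cast_sub hj]; ring,
    show b + j - 1 - j + 1 = b by ring]
  ring

def hypCoeff (N : ℕ) (b c : ℝ) (k : ℕ) : ℝ :=
  poch (-(N : ℝ)) k * poch b k / (poch c k * (k ! : ℝ))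

/-- The terminating hypergeometric series `₂F₁(-N, b; c; t)`. -/
def hyp2F1 (N : ℕ) (b c t : ℝ) : ℝ := ∑ k ∈ range (N + 1), hypCoeff N b c k * t ^ k

lemma hypCoeff_zero (N : ℕ) (b c : ℝ) : hypCoeff N b c 0 = 1 := by simp [hypCoeff, poch_zero]

/-- Chu–Vandermonde. -/
theorem sum_hypCoeff (N : ℕ) (b : ℝ) {c : ℝ} (hc : poch c N ≠ 0) :
    ∑ k ∈ range (N + 1), hypCoeff N b c k = poch (c - b) N / poch c N := by
  rw [eq_div_iff hc, Finset.sum_mul, poch_sub_eq_sum]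
  refine Finset.sum_congr rfl fun j hj => ?_
  have hj : j ≤ N := Nat.lt_succ_iff.mp (Finset.mem_range.mp hj)
  have hcj : poch c j ≠ 0 := poch_ne_zero_of_le hc hj
  rw [hypCoeff, poch_neg_natCast, ← Nat.add_sub_cancel' hj, poch_add,
    Nat.add_sub_cancel_left]
  field_simp

lemma hypCoeff_add_mul_choose {N i : ℕ} (hi : i ≤ N) (b c : ℝ) (l : ℕ) :
    hypCoeff N b c (i + l) * (i + l).choose i =
      hypCoeff N b c i * hypCoeff (N - i) (b + i) (c + i) l := by
  have hfac : ((i + l) ! : ℝ) = (i + l).choose i * (i ! * l !) := by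
    rw [← Nat.add_choose_mul_factorial_mul_factorial, Nat.choose_symm_add]
    push_cast; ring
  have hchoose : ((i + l).choose i : ℝ) ≠ 0 :=
    Nat.cast_ne_zero.mpr (Nat.choose_pos (Nat.le_add_right i l)).ne'
  simp only [hypCoeff, poch_add, hfac, Nat.cast_sub hi,
    show -(N : ℝ) + i = -((N : ℝ) - i) by ring]
  field_simp

lemma sum_hypCoeff_mul_choose {N i : ℕ} (hi : i ≤ N) (b : ℝ) {c : ℝ} (hc : poch c N ≠ 0) :
    ∑ j ∈ range (N + 1), hypCoeff N b c j * j.choose i =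
      hypCoeff N b c i * (poch (c - b) (N - i) / poch (c + i) (N - i)) := by
  have hci : poch (c + i) (N - i) ≠ 0 := by
    rw [← Nat.add_sub_cancel' hi, poch_add] at hc
    exact right_ne_zero_of_mul (by simpa using hc)
  rw [show N + 1 = i + (N - i + 1) by omega, Finset.sum_range_add,
    Finset.sum_eq_zero fun j hj => by rw [Nat.choose_eq_zero_of_lt (Finset.mem_range.mp hj),
      Nat.cast_zero, mul_zero], zero_add]
  simp_rw [hypCoeff_add_mul_choose hi]
  rw [← Finset.mul_sum, ← add_sub_add_right_eq_sub c b (i : ℝ), ← sum_hypCoeff _ _ hci]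

lemma one_sub_pow_eq_sum_range {R : Type*} [CommRing R] (t : R) {j N : ℕ} (hj : j ≤ N) :
    (1 - t) ^ j = ∑ i ∈ range (N + 1), j.choose i * (-t) ^ i := by
  rw [sub_eq_neg_add, add_pow]
  calc _ = ∑ i ∈ range (j + 1), j.choose i * (-t) ^ i := Finset.sum_congr rfl fun i _ => by ring
    _ = _ := Finset.sum_subset (Finset.range_subset_range.mpr (Nat.succ_le_succ hj))
      fun i _ hi => by rw [Nat.choose_eq_zero_of_lt (by simpa using hi), Nat.cast_zero, zero_mul]

/-- Pfaff's transformation. -/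
theorem hyp2F1_one_sub {N : ℕ} {b c : ℝ} (hc : poch c N ≠ 0)
    (hd : poch (b - c - N + 1) N ≠ 0) (t : ℝ) :
    hyp2F1 N b c (1 - t) = poch (c - b) N / poch c N * hyp2F1 N b (b - c - N + 1) t := by
  calc hyp2F1 N b c (1 - t)
      = ∑ i ∈ range (N + 1),
          (∑ j ∈ range (N + 1), hypCoeff N b c j * j.choose i) * (-t) ^ i := by
        simp_rw [hyp2F1, Finset.sum_mul]
        rw [Finset.sum_comm]
        refine Finset.sum_congr rfl fun j hj => ?_
        rw [one_sub_pow_eq_sum_range t (Nat.lt_succ_iff.mp (Finset.mem_range.mp hj)),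
          Finset.mul_sum]
        exact Finset.sum_congr rfl fun i _ => by ring
    _ = _ := by
      rw [hyp2F1, Finset.mul_sum]
      refine Finset.sum_congr rfl fun i hi => ?_
      have hi : i ≤ N := Nat.lt_succ_iff.mp (Finset.mem_range.mp hi)
      have hcb : poch (c - b) N = poch (c - b) (N - i) * ((-1) ^ i * poch (b - c - N + 1) i) := by
        conv_lhs => rw [← Nat.sub_add_cancel hi, poch_add]
        rw [show c - b + ((N - i : ℕ) : ℝ) = -(b - c - N + i) by
            push_cast [Nat.cast_sub hi]; ring,
          poch_neg, show b - c - N + i - i + 1 = b - c - N + 1 by ring]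
      have hcN : poch c N = poch c i * poch (c + i) (N - i) := by
        rw [← poch_add, Nat.add_sub_cancel' hi]
      have hci : poch c i ≠ 0 := poch_ne_zero_of_le hc hi
      have hdi : poch (b - c - N + 1) i ≠ 0 := poch_ne_zero_of_le hd hi
      have hci' : poch (c + i) (N - i) ≠ 0 := right_ne_zero_of_mul (hcN ▸ hc)
      rw [sum_hypCoeff_mul_choose hi b hc, hcb, hcN, neg_pow, hypCoeff, hypCoeff]
      field_simp

lemma jacobiP_two_mul_sub_one (N : ℕ) (a b x : ℝ) :
    jacobiP N a b (2 * x - 1) =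
      poch (a + 1) N / N ! * hyp2F1 N (N + a + b + 1) (a + 1) (1 - x) := by
  rw [jacobiP, show (1 - (2 * x - 1)) / 2 = 1 - x by ring]
  rfl

lemma jacobiP_two_mul_sub_one_eq_hyp2F1 {N : ℕ} {a b : ℝ} (ha : poch (a + 1) N ≠ 0)
    (hb : poch (b + 1) N ≠ 0) (x : ℝ) :
    jacobiP N a b (2 * x - 1) =
      (-1) ^ N * poch (b + 1) N / N ! * hyp2F1 N (N + a + b + 1) (b + 1) x := by
  have hd : (N + a + b + 1) - (a + 1) - N + 1 = b + 1 := by ring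
  rw [jacobiP_two_mul_sub_one, ← sub_sub_cancel 1 x, hyp2F1_one_sub ha (hd ▸ hb), hd,
    sub_sub_cancel, show a + 1 - (N + a + b + 1) = -(N + b) by ring, poch_neg,
    show N + b - N + 1 = b + 1 by ring]
  field_simp

@[fun_prop]
lemma continuous_jacobiP (N : ℕ) (a b : ℝ) : Continuous (jacobiP N a b) := by
  unfold jacobiP
  fun_prop

lemma ofReal_one_sub_rpow_mul_rpow {s b x : ℝ} (hx : x ∈ Set.Ioo 0 1) :
    (((1 - x) ^ s * x ^ b : ℝ) : ℂ) =
      (x : ℂ) ^ (((b + 1 : ℝ) : ℂ) - 1) * (1 - (x : ℂ)) ^ (((s + 1 : ℝ) : ℂ) - 1) := by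
  push_cast
  rw [add_sub_cancel_right, add_sub_cancel_right,
    Complex.ofReal_cpow hx.1.le, Complex.ofReal_cpow (by linarith [hx.2]), Complex.ofReal_sub,
    Complex.ofReal_one, mul_comm]

lemma intervalIntegrable_one_sub_rpow_mul_rpow {s b : ℝ} (hs : -1 < s) (hb : -1 < b) :
    IntervalIntegrable (fun x => (1 - x) ^ s * x ^ b) volume 0 1 := by
  have h := Complex.betaIntegral_convergent (u := ((b + 1 : ℝ) : ℂ))
    (v := ((s + 1 : ℝ) : ℂ)) (by simp; linarith) (by simp; linarith)
  refine IntervalIntegrable.congr_uIoo (f := fun x => RCLike.re _) ⟨h.1.re, h.2.re⟩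
    fun x hx => ?_
  rw [Set.uIoo_of_le zero_le_one] at hx
  simp only [← ofReal_one_sub_rpow_mul_rpow hx]
  exact Complex.ofReal_re _

lemma integral_one_sub_rpow_mul_rpow {s b : ℝ} (hs : -1 < s) (hb : -1 < b) :
    ∫ x in (0:ℝ)..1, (1 - x) ^ s * x ^ b =
      Real.Gamma (s + 1) * Real.Gamma (b + 1) / Real.Gamma (s + b + 2) := by
  have h := Complex.betaIntegral_eq_Gamma_mul_div ((b + 1 : ℝ) : ℂ) ((s + 1 : ℝ) : ℂ)
    (by simp; linarith) (by simp; linarith)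
  rw [Complex.betaIntegral, ← intervalIntegral.integral_congr_Ioo_of_le zero_le_one
    fun x hx => ofReal_one_sub_rpow_mul_rpow hx, intervalIntegral.integral_ofReal,
    ← Complex.ofReal_add, Complex.Gamma_ofReal, Complex.Gamma_ofReal, Complex.Gamma_ofReal] at h
  rw [show s + b + 2 = b + 1 + (s + 1) by ring, mul_comm]
  exact_mod_cast h

lemma integral_pow_mul_one_sub_rpow_mul_rpow {s b : ℝ} (hs : -1 < s) (hb : -1 < b) (j : ℕ) :
    ∫ x in (0:ℝ)..1, x ^ j * ((1 - x) ^ s * x ^ b) =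
      Real.Gamma (s + 1) * Real.Gamma (b + 1) / Real.Gamma (s + b + 2) *
        (poch (b + 1) j / poch (s + b + 2) j) := by
  rw [intervalIntegral.integral_congr_Ioo_of_le zero_le_one
      (g := fun x => (1 - x) ^ s * x ^ (b + j))
      fun x hx => by simp only [Real.rpow_add_natCast hx.1.ne']; ring,
    integral_one_sub_rpow_mul_rpow hs (lt_add_of_lt_of_nonneg hb j.cast_nonneg),
    show b + j + 1 = b + 1 + j by ring,
    show s + (b + j) + 2 = s + b + 2 + j by ring, Gamma_add_natCast_eq_poch_mul (by linarith),
    Gamma_add_natCast_eq_poch_mul (by linarith)]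
  have := (poch_pos (show 0 < s + b + 2 by linarith) j).ne'
  have := (Real.Gamma_pos_of_pos (show 0 < s + b + 2 by linarith)).ne'
  field_simp

theorem integral_jacobiP_mul_one_sub_rpow_mul_rpow {a b s : ℝ} (ha : -1 < a) (hb : -1 < b)
    (hs : -1 < s) (M : ℕ) :
    ∫ x in (0:ℝ)..1, jacobiP M a b (2 * x - 1) * ((1 - x) ^ s * x ^ b) =
      (-1) ^ M * poch (b + 1) M / M ! *
        (Real.Gamma (s + 1) * Real.Gamma (b + 1) / Real.Gamma (s + b + 2)) *
          (poch (s - a - M + 1) M / poch (s + b + 2) M) := by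
  have ha1 : 0 < a + 1 := by linarith
  have hb1 : 0 < b + 1 := by linarith
  have hsb : 0 < s + b + 2 := by linarith
  have hterm : ∀ j, IntervalIntegrable
      (fun x => hypCoeff M (M + a + b + 1) (b + 1) j * (x ^ j * ((1 - x) ^ s * x ^ b)))
      volume 0 1 :=
    fun j => ((intervalIntegrable_one_sub_rpow_mul_rpow hs hb).continuousOn_mul
      (continuousOn_pow j)).const_mul _
  calc _ = (-1) ^ M * poch (b + 1) M / M ! * ∫ x in (0:ℝ)..1, ∑ j ∈ range (M + 1),
        hypCoeff M (M + a + b + 1) (b + 1) j * (x ^ j * ((1 - x) ^ s * x ^ b)) := by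
        simp_rw [jacobiP_two_mul_sub_one_eq_hyp2F1 (poch_pos ha1 M).ne' (poch_pos hb1 M).ne',
          hyp2F1, mul_assoc, Finset.sum_mul, mul_assoc, intervalIntegral.integral_const_mul]
    _ = (-1) ^ M * poch (b + 1) M / M ! *
        (Real.Gamma (s + 1) * Real.Gamma (b + 1) / Real.Gamma (s + b + 2) *
          ∑ j ∈ range (M + 1), hypCoeff M (M + a + b + 1) (s + b + 2) j) := by
        rw [intervalIntegral.integral_finsetSum fun j _ => hterm j]
        congr 1
        rw [Finset.mul_sum]
        refine Finset.sum_congr rfl fun j _ => ?_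
        have := (poch_pos hb1 j).ne'
        rw [intervalIntegral.integral_const_mul, integral_pow_mul_one_sub_rpow_mul_rpow hs hb,
          hypCoeff, hypCoeff]
        field_simp
    _ = _ := by
      rw [sum_hypCoeff _ _ (poch_pos hsb M).ne',
        show s + b + 2 - (M + a + b + 1) = s - a - M + 1 by ring]
      ring

lemma integral_hyp2F1_one_sub_mul {f : ℝ → ℝ} (hf : Continuous f) {s b : ℝ} (hs : -1 < s)
    (hb : -1 < b) (N : ℕ) (B C : ℝ) :
    ∫ x in (0:ℝ)..1, hyp2F1 N B C (1 - x) * (f x * ((1 - x) ^ s * x ^ b)) =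
      ∑ k ∈ range (N + 1),
        hypCoeff N B C k * ∫ x in (0:ℝ)..1, f x * ((1 - x) ^ (s + k) * x ^ b) := by
  have hint (k : ℕ) :
      IntervalIntegrable (fun x => f x * ((1 - x) ^ (s + k) * x ^ b)) volume 0 1 :=
    (intervalIntegrable_one_sub_rpow_mul_rpow (lt_add_of_lt_of_nonneg hs k.cast_nonneg)
      hb).continuousOn_mul hf.continuousOn
  simp_rw [← intervalIntegral.integral_const_mul]
  rw [← intervalIntegral.integral_finsetSum fun k _ => (hint k).const_mul _]
  refine intervalIntegral.integral_congr_Ioo_of_le zero_le_one fun x hx => ?_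
  simp only [hyp2F1, Finset.sum_mul, Real.rpow_add_natCast (sub_pos.mpr hx.2).ne']
  exact Finset.sum_congr rfl fun k _ => by ring

theorem integral_jacobiP_mul_one_sub_pow_eq_zero {a b : ℝ} (ha : -1 < a) (hb : -1 < b)
    {M k : ℕ} (hk : k < M) :
    ∫ x in (0:ℝ)..1, jacobiP M a b (2 * x - 1) * ((1 - x) ^ (a + k) * x ^ b) = 0 := by
  rw [integral_jacobiP_mul_one_sub_rpow_mul_rpow ha hb
      (lt_add_of_lt_of_nonneg ha k.cast_nonneg),
    show a + k - a - M + 1 = -((M - (k + 1) : ℕ) : ℝ) by push_cast [Nat.cast_sub hk]; ring,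
    poch_neg_natCast_of_lt (by omega), zero_div, mul_zero]

lemma cJ_mul_integral_jacobiP_mul_weight {α γ : ℝ} (hα : -1 < α) (hγ : -1 < γ)
    (M : ℕ) :
    cJ α γ *
        ∫ x in (0:ℝ)..1, jacobiP M (γ + 2) α (2 * x - 1) * ((1 - x) ^ (γ + 1) * x ^ α) =
      (γ + 1) * poch (α + 1) M / poch (γ + α + 2) (M + 1) := by
  have hγα : 0 < γ + α + 2 := by linarith
  have hpoch : poch (γ + α + 2) (M + 1) = (γ + α + 2) * poch (γ + 1 + α + 2) M := by
    rw [Nat.add_comm, poch_add, show γ + α + 2 + (1 : ℕ) = γ + 1 + α + 2 by push_cast; ring]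
    simp [poch]
  have hsign : (-1 : ℝ) ^ M * (-1) ^ M = 1 := by rw [← mul_pow]; norm_num
  rw [integral_jacobiP_mul_one_sub_rpow_mul_rpow (by linarith) hα (by linarith),
    show γ + 1 - (γ + 2) - M + 1 = -(M : ℝ) by ring, poch_neg_natCast, Nat.choose_self,
    Real.Gamma_add_one (by linarith), show γ + 1 + α + 2 = γ + α + 2 + 1 by ring,
    Real.Gamma_add_one hγα.ne', hpoch, show γ + α + 2 + 1 = γ + 1 + α + 2 by ring, cJ]
  have := (poch_pos (show 0 < γ + 1 + α + 2 by linarith) M).ne'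
  have := (Real.Gamma_pos_of_pos hγα).ne'
  have := (Real.Gamma_pos_of_pos (show 0 < γ + 1 by linarith)).ne'
  have := (Real.Gamma_pos_of_pos (show 0 < α + 1 by linarith)).ne'
  field_simp
  linear_combination (γ + 1) * poch (α + 1) M * hsign

/-- For `m > n ≥ 0`,
`c_{α,γ} ∫₀¹ P_n^{(γ,α)}(2x−1)P_{m-1}^{(γ+2,α)}(2x−1)(1−x)^{γ+1}x^α dx
 = (γ+1)(α+1)_{m-1}(γ+1)ₙ/((γ+α+2)_m n!)`. -/
theorem jacobi_cross_integral (α γ : ℝ) (hα : -1 < α) (hγ : -1 < γ)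
    (m n : ℕ) (hmn : n < m) :
    cJ α γ * ∫ x in (0:ℝ)..1,
        jacobiP n γ α (2 * x - 1) * jacobiP (m - 1) (γ + 2) α (2 * x - 1) *
          ((1 - x) ^ (γ + 1) * x ^ α) =
      (γ + 1) * poch (α + 1) (m - 1) * poch (γ + 1) n /
        (poch (γ + α + 2) m * (Nat.factorial n : ℝ)) := by
  obtain ⟨M, rfl⟩ : ∃ M, m = M + 1 := ⟨m - 1, by omega⟩
  have hvanish : ∀ k ∈ range (n + 1), k ≠ 0 → hypCoeff n (n + γ + α + 1) (γ + 1) k *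
      ∫ x in (0:ℝ)..1, jacobiP M (γ + 2) α (2 * x - 1) * ((1 - x) ^ (γ + 1 + k) * x ^ α) =
        0 := by
    intro k hk hk0
    obtain ⟨j, rfl⟩ := Nat.exists_eq_add_one_of_ne_zero hk0
    rw [show γ + 1 + ((j + 1 : ℕ) : ℝ) = γ + 2 + j by push_cast; ring,
      integral_jacobiP_mul_one_sub_pow_eq_zero (by linarith) hα
        (by rw [Finset.mem_range] at hk; omega), mul_zero]
  simp_rw [Nat.add_sub_cancel, jacobiP_two_mul_sub_one n γ α, mul_assoc,
    intervalIntegral.integral_const_mul]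
  rw [integral_hyp2F1_one_sub_mul (f := fun x => jacobiP M (γ + 2) α (2 * x - 1)) (by fun_prop)
      (by linarith) hα, Finset.sum_eq_single 0 hvanish (by simp), hypCoeff_zero, one_mul,
    Nat.cast_zero, add_zero, mul_left_comm, cJ_mul_integral_jacobiP_mul_weight hα hγ]
  ring
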